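/- Let ε ∈ [0,1) and let T^ε be an ε-approximate greedy query tree for π. Then C(T^ε, π) ≤ (12/(1−ε)) · C* · ln( 1 / min_{h∈H} π(h) ), where C* = min_T C(T, π) is the minimum cost over all query trees T whose leaves are H. -/

import Mathlib

open Finset

namespace ActiveLearning

variable {H A : Type*} {m : ℕ}

/-- The total mass of a weight function `v` on a finite set `S`. -/
def mass (v : H → ℝ) (S : Finset H) : ℝ := ∑ s ∈ S, v s

/-- `v` restricted to `S` and normalized. -/
noncomputable def restrict [DecidableEq H] (v : H → ℝ) (S : Finset H) : H → ℝ :=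
  fun h => if h ∈ S then v h / mass v S else 0

/-- The shrinkage `Δ` of a question `qi` on `(S, v)`. -/
noncomputable def shrink [Fintype A] [DecidableEq A] (qi : H → A)
    (S : Finset H) (v : H → ℝ) : ℝ :=
  mass v S - ∑ j : A, (mass v (S.filter fun s => qi s = j)) ^ 2 / mass v S

/-- The collision probability of a distribution `v`. -/
def CP [Fintype H] (v : H → ℝ) : ℝ := ∑ z : H, (v z) ^ 2

/-- Query trees: internal nodes are questions (indexed by `Fin m`), branches are answers,
leaves are hypotheses. -/
inductive QTree (m : ℕ) (H A : Type*) : Type _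
  | leaf : H → QTree m H A
  | node : Fin m → (A → QTree m H A) → QTree m H A

/-- Follow the answers of hypothesis `h` down the tree, returning the leaf reached. -/
def follow (q : Fin m → H → A) : QTree m H A → H → H
  | .leaf h', _ => h'
  | .node i ch, h => follow q (ch (q i h)) h

/-- The cost `c_T(h)`: sum of costs of the questions on the root-to-`h` path. -/
def pathCost (q : Fin m → H → A) (c : Fin m → ℝ) : QTree m H A → H → ℝ
  | .leaf _, _ => 0
  | .node i ch, h => c i + pathCost q c (ch (q i h)) h

/-- The leaves of `T` include `S`: every `h ∈ S` is identified by `T`. -/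
def ValidOn (q : Fin m → H → A) (T : QTree m H A) (S : Finset H) : Prop :=
  ∀ h ∈ S, follow q T h = h

/-- The expected cost `C(T, v)` of a query tree `T` under weights `v`. -/
noncomputable def treeCost [Fintype H] (q : Fin m → H → A) (c : Fin m → ℝ)
    (T : QTree m H A) (v : H → ℝ) : ℝ :=
  ∑ h : H, v h * pathCost q c T h

/-- The questions asked along the root-to-`h` path. -/
def pathQs (q : Fin m → H → A) : QTree m H A → H → List (Fin m)
  | .leaf _, _ => []
  | .node i ch, h => i :: pathQs q (ch (q i h)) h

/-- `T` is a greedy query tree for `π` on version space `S`: at every node it asks a question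
maximizing the shrinkage-cost ratio and recurses on each nonempty answer class. -/
inductive IsGreedy [Fintype A] [DecidableEq A] [DecidableEq H]
    (q : Fin m → H → A) (c : Fin m → ℝ) (π : H → ℝ) :
    QTree m H A → Finset H → Prop
  | leaf (h : H) : IsGreedy q c π (.leaf h) {h}
  | node (S : Finset H) (i : Fin m) (ch : A → QTree m H A)
      (hcard : 1 < S.card)
      (hmax : ∀ j : Fin m,
        shrink (q j) S (restrict π S) / c j ≤ shrink (q i) S (restrict π S) / c i)
      (hch : ∀ a : A, (S.filter fun s => q i s = a).Nonempty →
        IsGreedy q c π (ch a) (S.filter fun s => q i s = a)) :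
      IsGreedy q c π (.node i ch) S

/-- `T` is an `ε`-approximate greedy query tree for `π` on version space `S`. -/
inductive IsApproxGreedy [Fintype A] [DecidableEq A] [DecidableEq H]
    (ε : ℝ) (q : Fin m → H → A) (c : Fin m → ℝ) (π : H → ℝ) :
    QTree m H A → Finset H → Prop
  | leaf (h : H) : IsApproxGreedy ε q c π (.leaf h) {h}
  | node (S : Finset H) (i : Fin m) (ch : A → QTree m H A)
      (hcard : 1 < S.card)
      (happrox : ∀ j : Fin m,
        (1 - ε) * (shrink (q j) S (restrict π S) / c j) ≤
          shrink (q i) S (restrict π S) / c i)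
      (hch : ∀ a : A, (S.filter fun s => q i s = a).Nonempty →
        IsApproxGreedy ε q c π (ch a) (S.filter fun s => q i s = a)) :
      IsApproxGreedy ε q c π (.node i ch) S

/-- `T` is irreducible on version space `S`: every asked question strictly splits the
surviving set. -/
inductive Irreducible [DecidableEq A] (q : Fin m → H → A) :
    QTree m H A → Finset H → Prop
  | leaf (h : H) (S : Finset H) : Irreducible q (.leaf h) S
  | node (S : Finset H) (i : Fin m) (ch : A → QTree m H A)
      (hsplit : ∃ s ∈ S, ∃ t ∈ S, q i s ≠ q i t)
      (hch : ∀ a : A, (S.filter fun s => q i s = a).Nonempty →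
        Irreducible q (ch a) (S.filter fun s => q i s = a)) :
      Irreducible q (.node i ch) S


/-!
Let `D(S) = π(S)² − Σ_{h ∈ S} π(h)²` be the mass of ordered pairs of distinct elements of `S`.
Asking `q_i` on `S` removes exactly `π(S) · Δ_i(S, π)` of it, and shrinkage is monotone in `S`.
Summing over the nodes of any tree `T` that identifies `S` therefore gives `D(S) ≤ M · C_S(T)`
as soon as `Δ_j(R, π) ≤ M c_j` for all `R ⊆ S` and all `j`. At a node of `T^ε` this says that
the question asked satisfies `Δ_i(S, π) ≥ (1 − ε) c_i D(S) / C_S(T)`, so each child keeps at most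
the fraction `1 − (1 − ε) c_i π(S) / C_S(T)` of `D(S)`. As `D(S) ≥ (min π)²` whenever `|S| ≥ 2`,
the potential `log (D(S) / (min π)²) + 1` drops by at least `(1 − ε) c_i π(S) / C_S(T)` (because
`log x ≤ x − 1`), which pays for the question; at the root it is at most `4 log (1 / min π)`.
-/

def pairMass (v : H → ℝ) (S : Finset H) : ℝ := mass v S ^ 2 - ∑ h ∈ S, v h ^ 2

def costOn (q : Fin m → H → A) (c : Fin m → ℝ) (T : QTree m H A) (v : H → ℝ)
    (S : Finset H) : ℝ :=
  ∑ h ∈ S, v h * pathCost q c T h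

/-- `d0` stands for a lower bound of `pairMass v R` over all `R` with at least two elements. -/
noncomputable def potential (v : H → ℝ) (d0 : ℝ) (S : Finset H) : ℝ :=
  if 1 < S.card then Real.log (pairMass v S / d0) + 1 else 0

lemma add_sq_div_add_le {x y V W : ℝ} (hy : 0 ≤ y) (hyW : y ≤ W) (hV : 0 < V) :
    (x + y) ^ 2 / (V + W) ≤ x ^ 2 / V + y := by
  rw [div_le_iff₀ (by linarith), div_add' _ _ _ hV.ne', div_mul_eq_mul_div, le_div_iff₀ hV]
  nlinarith [mul_nonneg (sq_nonneg x) (sub_nonneg.2 hyW), mul_nonneg hy (sq_nonneg (x - V)),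
    mul_nonneg (mul_nonneg hy hV.le) (sub_nonneg.2 hyW)]

section Mass

variable {v : H → ℝ}

lemma mass_nonneg (hv : ∀ h, 0 ≤ v h) (S : Finset H) : 0 ≤ mass v S :=
  sum_nonneg fun h _ => hv h

lemma mass_mono (hv : ∀ h, 0 ≤ v h) {R S : Finset H} (hRS : R ⊆ S) : mass v R ≤ mass v S :=
  sum_le_sum_of_subset_of_nonneg hRS fun h _ _ => hv h

lemma sum_mass_fiber [Fintype A] [DecidableEq A] (v : H → ℝ) (f : H → A) (S : Finset H) :
    ∑ a, mass v (S.filter fun s => f s = a) = mass v S :=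
  sum_fiberwise S f v

lemma mass_mul_shrink [Fintype A] [DecidableEq A] (hv : ∀ h, 0 ≤ v h) (f : H → A)
    (S : Finset H) :
    mass v S * shrink f S v = mass v S ^ 2 - ∑ a, mass v (S.filter fun s => f s = a) ^ 2 := by
  rcases (mass_nonneg hv S).eq_or_lt with hS | hS
  · have hfib : ∀ a, mass v (S.filter fun s => f s = a) = 0 := fun a =>
      le_antisymm (hS ▸ mass_mono hv (filter_subset _ S)) (mass_nonneg hv _)
    simp [hfib, ← hS]
  · rw [shrink, ← sum_div, mul_sub, mul_div_cancel₀ _ hS.ne', sq]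

lemma shrink_mono [Fintype A] [DecidableEq A] (hv : ∀ h, 0 ≤ v h) (f : H → A)
    {R S : Finset H} (hRS : R ⊆ S) (hR : 0 < mass v R) : shrink f R v ≤ shrink f S v := by
  have hfib : ∀ a, mass v (R.filter fun s => f s = a) ≤ mass v (S.filter fun s => f s = a) :=
    fun a => mass_mono hv (filter_subset_filter _ hRS)
  have hgain : ∀ a, mass v (S.filter fun s => f s = a) - mass v (R.filter fun s => f s = a)
      ≤ mass v S - mass v R := fun a => by
    rw [← sum_mass_fiber v f S, ← sum_mass_fiber v f R, ← sum_sub_distrib]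
    exact single_le_sum (fun b _ => sub_nonneg.2 (hfib b)) (mem_univ a)
  have hterm : ∀ a, mass v (S.filter fun s => f s = a) ^ 2 / mass v S
      ≤ mass v (R.filter fun s => f s = a) ^ 2 / mass v R
        + (mass v (S.filter fun s => f s = a) - mass v (R.filter fun s => f s = a)) := fun a => by
    simpa only [add_sub_cancel] using
      add_sq_div_add_le (x := mass v (R.filter fun s => f s = a))
        (sub_nonneg.2 (hfib a)) (hgain a) hR
  have hsum := sum_le_sum fun a (_ : a ∈ univ) => hterm a
  rw [sum_add_distrib, sum_sub_distrib, sum_mass_fiber, sum_mass_fiber] at hsum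
  simp only [shrink]
  linarith

lemma mass_restrict [DecidableEq H] (v : H → ℝ) {R S : Finset H} (hRS : R ⊆ S) :
    mass (restrict v S) R = mass v R / mass v S := by
  rw [mass, mass, sum_div]
  exact sum_congr rfl fun h hh => if_pos (hRS hh)

lemma shrink_restrict [Fintype A] [DecidableEq A] [DecidableEq H] (f : H → A) {S : Finset H}
    (hS : mass v S ≠ 0) : shrink f S (restrict v S) = shrink f S v / mass v S := by
  simp only [shrink, mass_restrict v subset_rfl, mass_restrict v (filter_subset _ S),
    div_self hS, div_one, sub_div, sum_div, div_pow]
  congr 1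
  exact sum_congr rfl fun a _ => by rw [div_div, sq (mass v S)]

end Mass

section PairMass

variable {v : H → ℝ}

lemma pairMass_nonneg (hv : ∀ h, 0 ≤ v h) (S : Finset H) : 0 ≤ pairMass v S :=
  sub_nonneg.2 (sum_sq_le_sq_sum_of_nonneg fun h _ => hv h)

lemma pairMass_le_sq_mass (S : Finset H) : pairMass v S ≤ mass v S ^ 2 :=
  sub_le_self _ (sum_nonneg fun h _ => sq_nonneg (v h))

lemma pairMass_of_subset_singleton {S : Finset H} {x : H} (hS : S ⊆ {x}) : pairMass v S = 0 := by
  rcases subset_singleton_iff.1 hS with rfl | rfl <;> simp [pairMass, mass]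

lemma pairMass_eq_sum_mul (v : H → ℝ) (S : Finset H) :
    pairMass v S = ∑ h ∈ S, v h * (mass v S - v h) := by
  simp only [pairMass, mul_sub, sum_sub_distrib, ← sum_mul, sq]
  rfl

lemma sq_le_pairMass {m0 : ℝ} (hm0 : 0 ≤ m0) {S : Finset H} (hv : ∀ h ∈ S, m0 ≤ v h)
    (hS : 1 < S.card) : m0 ^ 2 ≤ pairMass v S := by
  classical
  have hv0 : ∀ h ∈ S, 0 ≤ v h := fun h hh => hm0.trans (hv h hh)
  have hrest : ∀ h ∈ S, m0 ≤ mass v S - v h := fun h hh => by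
    obtain ⟨y, hy, hyh⟩ := exists_mem_ne hS h
    have hpair : ({h, y} : Finset H) ⊆ S := insert_subset hh (singleton_subset_iff.2 hy)
    have := sum_le_sum_of_subset_of_nonneg hpair fun z hz _ => hv0 z hz
    rw [sum_pair hyh.symm] at this
    linarith [hv y hy, show mass v S = ∑ z ∈ S, v z from rfl]
  obtain ⟨x, hx⟩ := card_pos.1 (zero_lt_one.trans hS)
  calc m0 ^ 2 ≤ v x * m0 := by rw [sq]; exact mul_le_mul_of_nonneg_right (hv x hx) hm0
    _ ≤ ∑ h ∈ S, v h * m0 := single_le_sum (fun h hh => mul_nonneg (hv0 h hh) hm0) hx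
    _ ≤ ∑ h ∈ S, v h * (mass v S - v h) :=
      sum_le_sum fun h hh => mul_le_mul_of_nonneg_left (hrest h hh) (hv0 h hh)
    _ = pairMass v S := (pairMass_eq_sum_mul v S).symm

lemma pairMass_eq_mass_mul_shrink_add [Fintype A] [DecidableEq A] (hv : ∀ h, 0 ≤ v h)
    (f : H → A) (S : Finset H) :
    pairMass v S = mass v S * shrink f S v + ∑ a, pairMass v (S.filter fun s => f s = a) := by
  rw [mass_mul_shrink hv]
  simp only [pairMass, sum_sub_distrib, sum_fiberwise S f fun h => v h ^ 2]
  ring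

lemma mass_mul_shrink_le_pairMass [Fintype A] [DecidableEq A] (hv : ∀ h, 0 ≤ v h)
    (f : H → A) (S : Finset H) : mass v S * shrink f S v ≤ pairMass v S := by
  rw [pairMass_eq_mass_mul_shrink_add hv f S]
  exact le_add_of_nonneg_right (sum_nonneg fun a _ => pairMass_nonneg hv _)

lemma pairMass_fiber_le [Fintype A] [DecidableEq A] (hv : ∀ h, 0 ≤ v h) (f : H → A)
    (S : Finset H) (a : A) :
    pairMass v (S.filter fun s => f s = a) ≤ pairMass v S - mass v S * shrink f S v := by
  rw [pairMass_eq_mass_mul_shrink_add hv f S, add_sub_cancel_left]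
  exact single_le_sum (f := fun b => pairMass v (S.filter fun s => f s = b))
    (fun b _ => pairMass_nonneg hv _) (mem_univ a)

lemma pairMass_fiber_le_mul [Fintype A] [DecidableEq A] (hv : ∀ h, 0 ≤ v h) (f : H → A)
    {S : Finset H} {κ C : ℝ} (hC : 0 < C) (hκ : κ * pairMass v S ≤ shrink f S v * C) (a : A) :
    pairMass v (S.filter fun s => f s = a) ≤ (1 - κ * mass v S / C) * pairMass v S := by
  refine (pairMass_fiber_le hv f S a).trans ?_
  have hremoved : κ * mass v S / C * pairMass v S ≤ mass v S * shrink f S v := by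
    rw [div_mul_eq_mul_div, div_le_iff₀ hC]
    nlinarith [mul_le_mul_of_nonneg_left hκ (mass_nonneg hv S)]
  linarith

lemma mul_mass_le [Fintype A] [DecidableEq A] (hv : ∀ h, 0 ≤ v h) (f : H → A)
    {S : Finset H} {κ C : ℝ} (hC : 0 ≤ C) (hD : 0 < pairMass v S)
    (hκ : κ * pairMass v S ≤ shrink f S v * C) : κ * mass v S ≤ C := by
  have := mul_le_mul_of_nonneg_left hκ (mass_nonneg hv S)
  nlinarith [mass_mul_shrink_le_pairMass hv f S]

end PairMass

section Trees

variable {q : Fin m → H → A} {c : Fin m → ℝ} {v : H → ℝ}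

lemma pathCost_nonneg (hc : ∀ i, 0 ≤ c i) (T : QTree m H A) (h : H) : 0 ≤ pathCost q c T h := by
  induction T with
  | leaf x => exact le_rfl
  | node i ch ih => exact add_nonneg (hc i) (ih _)

lemma costOn_nonneg (hv : ∀ h, 0 ≤ v h) (hc : ∀ i, 0 ≤ c i) (T : QTree m H A) (S : Finset H) :
    0 ≤ costOn q c T v S :=
  sum_nonneg fun h _ => mul_nonneg (hv h) (pathCost_nonneg hc T h)

lemma costOn_node [Fintype A] [DecidableEq A] (i : Fin m) (ch : A → QTree m H A)
    (S : Finset H) :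
    costOn q c (.node i ch) v S
      = c i * mass v S + ∑ a, costOn q c (ch a) v (S.filter fun s => q i s = a) := by
  simp only [costOn, pathCost, mul_add, sum_add_distrib]
  congr 1
  · rw [mass, mul_sum]
    exact sum_congr rfl fun h _ => mul_comm _ _
  rw [← sum_fiberwise S (q i) fun h => v h * pathCost q c (ch (q i h)) h]
  exact sum_congr rfl fun a _ => sum_congr rfl fun h hh => by rw [(mem_filter.1 hh).2]

lemma sum_costOn_fiber [Fintype A] [DecidableEq A] (T : QTree m H A) (f : H → A)
    (S : Finset H) : ∑ a, costOn q c T v (S.filter fun s => f s = a) = costOn q c T v S :=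
  sum_fiberwise S f _

lemma ValidOn.mono {T : QTree m H A} {R S : Finset H} (hT : ValidOn q T S) (hRS : R ⊆ S) :
    ValidOn q T R :=
  fun h hh => hT h (hRS hh)

lemma ValidOn.fiber [DecidableEq A] {i : Fin m} {ch : A → QTree m H A} {S : Finset H}
    (hT : ValidOn q (.node i ch) S) (a : A) :
    ValidOn q (ch a) (S.filter fun s => q i s = a) := by
  intro h hh
  obtain ⟨hS, rfl⟩ := mem_filter.1 hh
  exact hT h hS

lemma pairMass_le_mul_costOn [Fintype A] [DecidableEq A] (hv : ∀ h, 0 ≤ v h) {M : ℝ}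
    {S₀ : Finset H} (hM : ∀ j R, R ⊆ S₀ → 0 < mass v R → shrink (q j) R v ≤ M * c j)
    (T : QTree m H A) {S : Finset H} (hS : S ⊆ S₀) (hT : ValidOn q T S) :
    pairMass v S ≤ M * costOn q c T v S := by
  induction T generalizing S with
  | leaf x =>
    rw [pairMass_of_subset_singleton fun h hh => mem_singleton.2 (hT h hh).symm]
    simp [costOn, pathCost]
  | node i ch ih =>
    have hroot : mass v S * shrink (q i) S v ≤ mass v S * (M * c i) := by
      rcases (mass_nonneg hv S).eq_or_lt with h0 | h0
      · simp [← h0]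
      · exact mul_le_mul_of_nonneg_left (hM i S hS h0) h0.le
    calc pairMass v S
        = mass v S * shrink (q i) S v + ∑ a, pairMass v (S.filter fun s => q i s = a) :=
          pairMass_eq_mass_mul_shrink_add hv _ S
      _ ≤ mass v S * (M * c i) + ∑ a, M * costOn q c (ch a) v (S.filter fun s => q i s = a) :=
          add_le_add hroot <| sum_le_sum fun a _ =>
            ih a ((filter_subset _ S).trans hS) (hT.fiber a)
      _ = M * costOn q c (.node i ch) v S := by rw [costOn_node, ← mul_sum]; ring

end Trees

lemma mul_pairMass_le_shrink_mul_costOn [Fintype A] [DecidableEq A] [DecidableEq H]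
    {q : Fin m → H → A} {c : Fin m → ℝ} {π : H → ℝ} {ε : ℝ} (hε : ε < 1) (hπ : ∀ h, 0 ≤ π h)
    (hc : ∀ i, 0 < c i) {S : Finset H} (hS : 0 < mass π S) {i : Fin m}
    (happrox : ∀ j : Fin m,
      (1 - ε) * (shrink (q j) S (restrict π S) / c j) ≤ shrink (q i) S (restrict π S) / c i)
    {T : QTree m H A} (hT : ValidOn q T S) :
    (1 - ε) * c i * pairMass π S ≤ shrink (q i) S π * costOn q c T π S := by
  have hK : 0 < (1 - ε) * c i := mul_pos (sub_pos.2 hε) (hc i)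
  have hratio : ∀ j, (1 - ε) * shrink (q j) S π * c i ≤ shrink (q i) S π * c j := fun j => by
    have hj := happrox j
    rwa [shrink_restrict _ hS.ne', shrink_restrict _ hS.ne', div_right_comm _ (mass π S),
      div_right_comm (shrink (q i) S π), ← mul_div_assoc, div_le_div_iff_of_pos_right hS,
      mul_div_assoc', div_le_div_iff₀ (hc j) (hc i)] at hj
  have hM : ∀ j R, R ⊆ S → 0 < mass π R →
      shrink (q j) R π ≤ shrink (q i) S π / ((1 - ε) * c i) * c j := fun j R hRS hR =>
    (shrink_mono hπ _ hRS hR).trans <| by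
      rw [div_mul_eq_mul_div, le_div_iff₀ hK]
      linarith [hratio j]
  have hbound := mul_le_mul_of_nonneg_left (pairMass_le_mul_costOn hπ hM T subset_rfl hT) hK.le
  rwa [← mul_assoc, mul_div_cancel₀ _ hK.ne'] at hbound

section Potential

variable {v : H → ℝ} {d0 : ℝ}

lemma potential_le_of_pairMass_le (hd0 : 0 < d0)
    (hd0le : ∀ R : Finset H, 1 < R.card → d0 ≤ pairMass v R) {R S : Finset H}
    (hS : 1 < S.card) {t : ℝ} (ht : 0 ≤ t) (hRS : pairMass v R ≤ t * pairMass v S) :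
    potential v d0 R ≤ potential v d0 S - 1 + t := by
  have hDS : 0 < pairMass v S := hd0.trans_le (hd0le S hS)
  have hL : 0 ≤ Real.log (pairMass v S / d0) :=
    Real.log_nonneg ((one_le_div hd0).2 (hd0le S hS))
  rw [potential, potential, if_pos hS]
  split_ifs with hR
  · have hDR : 0 < pairMass v R := hd0.trans_le (hd0le R hR)
    have hsplit : Real.log (pairMass v R / d0)
        = Real.log (pairMass v S / d0) + Real.log (pairMass v R / pairMass v S) := by
      rw [← Real.log_mul (div_pos hDS hd0).ne' (div_pos hDR hDS).ne']
      congr 1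
      field_simp
    have hratio : pairMass v R / pairMass v S ≤ t := (div_le_iff₀ hDS).2 hRS
    linarith [Real.log_le_sub_one_of_pos (div_pos hDR hDS)]
  · linarith

lemma le_one_of_forall_le_of_mass_le_one {m0 : ℝ} {S : Finset H} (hS : S.Nonempty)
    (hm0 : 0 ≤ m0) (hv : ∀ h ∈ S, m0 ≤ v h) (hmass : mass v S ≤ 1) : m0 ≤ 1 := by
  obtain ⟨x, hx⟩ := hS
  calc m0 ≤ v x := hv x hx
    _ ≤ mass v S := single_le_sum (fun h hh => hm0.trans (hv h hh)) hx
    _ ≤ 1 := hmass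

lemma potential_le_four_mul_log {m0 : ℝ} {S : Finset H} (hS : S.Nonempty) (hm0 : 0 < m0)
    (hv : ∀ h ∈ S, m0 ≤ v h) (hmass : mass v S ≤ 1) :
    potential v (m0 ^ 2) S ≤ 4 * Real.log (1 / m0) := by
  have hm0_le_one := le_one_of_forall_le_of_mass_le_one hS hm0.le hv hmass
  rw [potential]
  split_ifs with hcard
  · obtain ⟨x, hx, y, hy, hxy⟩ := one_lt_card.1 hcard
    have hm0_half : m0 ≤ 1 / 2 := by
      classical
      have hpair := sum_le_sum_of_subset_of_nonneg (insert_subset hx (singleton_subset_iff.2 hy))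
        fun z hz _ => hm0.le.trans (hv z hz)
      rw [sum_pair hxy] at hpair
      linarith [hv x hx, hv y hy, show mass v S = ∑ z ∈ S, v z from rfl]
    have hD : pairMass v S ≤ 1 := (pairMass_le_sq_mass S).trans <|
      pow_le_one₀ (sum_nonneg fun h hh => hm0.le.trans (hv h hh)) hmass
    have hlog : Real.log (pairMass v S / m0 ^ 2) ≤ 2 * Real.log (1 / m0) := by
      rw [← Real.log_rpow (by positivity), Real.rpow_two, one_div_pow]
      exact Real.log_le_log (div_pos ((pow_pos hm0 2).trans_le (sq_le_pairMass hm0.le hv hcard))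
        (pow_pos hm0 2)) (div_le_div_of_nonneg_right hD (sq_nonneg m0))
    have hlog_two : Real.log 2 ≤ Real.log (1 / m0) :=
      Real.log_le_log two_pos ((le_div_iff₀ hm0).2 (by linarith))
    linarith [Real.log_two_gt_d9]
  · exact mul_nonneg zero_le_four (Real.log_nonneg ((le_div_iff₀ hm0).2 (by linarith)))

end Potential

theorem costOn_le_of_isApproxGreedy [Fintype A] [DecidableEq A] [DecidableEq H]
    {q : Fin m → H → A} {c : Fin m → ℝ} {π : H → ℝ} {ε d0 : ℝ} (hε : ε < 1)
    (hπ : ∀ h, 0 ≤ π h) (hc : ∀ i, 0 < c i) (hd0 : 0 < d0)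
    (hd0le : ∀ R : Finset H, 1 < R.card → d0 ≤ pairMass π R)
    {Tg : QTree m H A} {S : Finset H} (hg : IsApproxGreedy ε q c π Tg S)
    {T : QTree m H A} (hT : ValidOn q T S) :
    costOn q c Tg π S ≤ costOn q c T π S * potential π d0 S / (1 - ε) := by
  induction hg generalizing T with
  | leaf h => simp [costOn, pathCost, potential]
  | node S i ch hcard happrox hch ih =>
    have hε' : 0 < 1 - ε := sub_pos.2 hε
    have hD : 0 < pairMass π S := hd0.trans_le (hd0le S hcard)
    have hP : 0 < mass π S := (mass_nonneg hπ S).lt_of_ne fun hP0 => by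
      linarith [pairMass_le_sq_mass (v := π) S, show mass π S ^ 2 = 0 by rw [← hP0]; ring]
    have hgreedy := mul_pairMass_le_shrink_mul_costOn hε hπ hc hP happrox hT
    set C := costOn q c T π S
    have hC0 : 0 ≤ C := costOn_nonneg hπ (fun j => (hc j).le) T S
    have hC : 0 < C := hC0.lt_of_ne fun hzero => by
      rw [← hzero, mul_zero] at hgreedy
      linarith [mul_pos (mul_pos hε' (hc i)) hD]
    -- `r` is the fraction of `pairMass π S` that the root question is guaranteed to remove
    set r := (1 - ε) * c i * mass π S / C with hr
    have hfiber := pairMass_fiber_le_mul hπ (q i) hC hgreedy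
    have hr_le_one : r ≤ 1 :=
      (div_le_one hC).2 (mul_mass_le hπ (q i) hC0 hD hgreedy)
    have hchild : ∀ a, costOn q c (ch a) π (S.filter fun s => q i s = a)
        ≤ costOn q c T π (S.filter fun s => q i s = a) * (potential π d0 S - r) / (1 - ε) := by
      intro a
      rcases (S.filter fun s => q i s = a).eq_empty_or_nonempty with hempty | hne
      · simp [hempty, costOn]
      calc _ ≤ costOn q c T π (S.filter fun s => q i s = a)
              * potential π d0 (S.filter fun s => q i s = a) / (1 - ε) :=
            ih a hne (hT.mono (filter_subset _ S))
        _ ≤ _ := by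
          have hpot := potential_le_of_pairMass_le hd0 hd0le hcard (sub_nonneg.2 hr_le_one)
            (hfiber a)
          gcongr
          · exact costOn_nonneg hπ (fun j => (hc j).le) T _
          · linarith
    calc costOn q c (.node i ch) π S
        = c i * mass π S + ∑ a, costOn q c (ch a) π (S.filter fun s => q i s = a) :=
          costOn_node i ch S
      _ ≤ c i * mass π S + ∑ a, costOn q c T π (S.filter fun s => q i s = a)
            * (potential π d0 S - r) / (1 - ε) := by gcongr with a; exact hchild a
      _ = C * potential π d0 S / (1 - ε) := by
          rw [← sum_div, ← sum_mul, sum_costOn_fiber, hr]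
          field_simp
          ring

theorem approx_greedy_cost_bound_general [Fintype H] [Nonempty H] [Fintype A]
    [DecidableEq H] [DecidableEq A]
    (π : H → ℝ) (hπpos : ∀ h, 0 < π h) (hπsum : ∑ h : H, π h = 1)
    (q : Fin m → H → A) (c : Fin m → ℝ) (hc : ∀ i, 0 < c i)
    (ε : ℝ) (hε1 : ε < 1)
    (Tε : QTree m H A) (hTε : IsApproxGreedy ε q c π Tε Finset.univ) :
    ∀ T : QTree m H A, ValidOn q T Finset.univ →
      treeCost q c Tε π ≤
        (12 / (1 - ε)) * treeCost q c T π *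
          Real.log (1 / Finset.univ.inf' Finset.univ_nonempty π) := by
  intro T hT
  set m0 := univ.inf' univ_nonempty π
  have hm0 : 0 < m0 := (lt_inf'_iff _).2 fun h _ => hπpos h
  have hm0le : ∀ h ∈ univ, m0 ≤ π h := fun h hh => inf'_le π hh
  have hπ : ∀ h, 0 ≤ π h := fun h => (hπpos h).le
  have hcost := costOn_le_of_isApproxGreedy hε1 hπ hc (pow_pos hm0 2)
    (fun R hR => sq_le_pairMass hm0.le (fun h _ => hm0le h (mem_univ h)) hR) hTε hT
  have hpot := potential_le_four_mul_log univ_nonempty hm0 hm0le hπsum.le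
  have hlog : 0 ≤ Real.log (1 / m0) := Real.log_nonneg <| (le_div_iff₀ hm0).2 <| by
    simpa using le_one_of_forall_le_of_mass_le_one univ_nonempty hm0.le hm0le hπsum.le
  calc treeCost q c Tε π ≤ treeCost q c T π * potential π (m0 ^ 2) univ / (1 - ε) := hcost
    _ ≤ treeCost q c T π * (12 * Real.log (1 / m0)) / (1 - ε) := by
        gcongr
        · exact costOn_nonneg hπ (fun i => (hc i).le) T univ
        · linarith
    _ = 12 / (1 - ε) * treeCost q c T π * Real.log (1 / m0) := by ring

/-- An `ε`-approximate greedy query tree `T^ε` for `π` has cost at most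
`C(T^ε, π) ≤ (12/(1−ε)) · C* · ln( 1 / min_{h∈H} π(h) )`, where `C*` is the minimum cost
over all query trees whose leaves are `H` (formalized: the bound holds against every
such tree). -/
theorem approx_greedy_cost_bound [Fintype H] [Nonempty H] [Fintype A]
    [DecidableEq H] [DecidableEq A]
    (π : H → ℝ) (hπpos : ∀ h, 0 < π h) (hπsum : ∑ h : H, π h = 1)
    (hH : 1 < Fintype.card H)
    (q : Fin m → H → A) (c : Fin m → ℝ) (hc : ∀ i, 0 < c i)
    (hdist : ∀ h h' : H, h ≠ h' → ∃ i : Fin m, q i h ≠ q i h')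
    (ε : ℝ) (hε0 : 0 ≤ ε) (hε1 : ε < 1)
    (Tε : QTree m H A) (hTε : IsApproxGreedy ε q c π Tε Finset.univ) :
    ∀ T : QTree m H A, ValidOn q T Finset.univ →
      treeCost q c Tε π ≤
        (12 / (1 - ε)) * treeCost q c T π *
          Real.log (1 / Finset.univ.inf' Finset.univ_nonempty π) :=
  approx_greedy_cost_bound_general π hπpos hπsum q c hc ε hε1 Tε hTε
end ActiveLearning
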